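/- arXiv:1407.6329 — 2 statements merged into one kernel-verified Lean document; each statement's English description precedes it below -/
import Mathlib

section
/- Let m ≥ 1 and n ≥ 0 be integers, and suppose there exists an additive 1-perfect code in ℤ4^{2m} × ℤ2^{2n} with respect to the Doob D(m,n)-metric. Then there exist integers γ ≥ 0 and δ > 0 such that n = (4^{γ+δ} − 1)/3 and m = (4^{γ+2δ} − 4^{γ+δ})/6. -/
open SimpleGraph

/-- The box (Cartesian) product of an indexed family of simple graphs. -/
def boxPi {ι : Type*} {V : ι → Type*} (G : ∀ i, SimpleGraph (V i)) :
    SimpleGraph (∀ i, V i) where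
  Adj x y := ∃ i, (G i).Adj (x i) (y i) ∧ ∀ j, j ≠ i → x j = y j
  symm := by
    constructor
    rintro x y ⟨i, h, he⟩
    exact ⟨i, (G i).adj_symm h, fun j hj => (he j hj).symm⟩
  loopless := by
    constructor
    rintro x ⟨i, h, -⟩
    exact (G i).loopless.irrefl _ h

/-- The Shrikhande graph on `(ZMod 4) × (ZMod 4)`. -/
def Shri : SimpleGraph (ZMod 4 × ZMod 4) where
  Adj a b := a - b ∈
    ({(0, 1), (1, 0), (1, 1), (0, 3), (3, 0), (3, 3)} : Finset (ZMod 4 × ZMod 4))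
  symm := by
    constructor
    have h : ∀ a b : ZMod 4 × ZMod 4,
        a - b ∈ ({(0, 1), (1, 0), (1, 1), (0, 3), (3, 0), (3, 3)} :
          Finset (ZMod 4 × ZMod 4)) →
        b - a ∈ ({(0, 1), (1, 0), (1, 1), (0, 3), (3, 0), (3, 3)} :
          Finset (ZMod 4 × ZMod 4)) := by decide
    exact fun a b hab => h a b hab
  loopless := by
    constructor
    intro a h
    rw [sub_self] at h
    revert h
    decide

/-- `C` is a 1-perfect code in `G`: every vertex is at graph distance at most 1
(i.e., equal or adjacent) from exactly one element of `C`. -/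
def IsPerfectCode {V : Type*} (G : SimpleGraph V) (C : Set V) : Prop :=
  ∀ v : V, ∃! c : V, c ∈ C ∧ (v = c ∨ G.Adj v c)

/-- The vertex set `ℤ₄^{2m} × ℤ₂^{2n}`, the consecutive pairs of coordinates
being grouped together. -/
abbrev DoobVtx2 (m n : ℕ) : Type :=
  (Fin m → ZMod 4 × ZMod 4) × (Fin n → ZMod 2 × ZMod 2)

/-- The Doob graph `D(m, n)` on `ℤ₄^{2m} × ℤ₂^{2n}`: a Shrikhande graph on each
consecutive pair of the first `2m` `ZMod 4`-coordinates and a `K₄` on each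
consecutive pair of `ZMod 2`-coordinates; the whole graph is the box product of
these `m + n` factors. -/
def DoobGraphZ2 (m n : ℕ) : SimpleGraph (DoobVtx2 m n) :=
  (boxPi fun _ : Fin m => Shri) □
    (boxPi fun _ : Fin n => (⊤ : SimpleGraph (ZMod 2 × ZMod 2)))


/-! Since the translates of the unit ball `B` about `0` by the codewords tile the group, the
quotient `Q` of `ℤ₄^{2m} × ℤ₂^{2n}` by the code is in bijection with `B`, so `|Q| = 1 + 6m + 3n`,
a power of 2. A Shrikhande neighbour `d` of `0` has `2d ≠ 0` while `-d ∈ B`, so the 2-torsion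
`Q[2]` is the image of the `K₄`-part of `B` and `|Q[2]| = 1 + 3n`. As `Q` has exponent 4,
`2Q ≤ Q[2]`, whence `|Q| ∣ |Q[2]|²`. Both orders are `≡ 1 mod 3`, hence powers of 4, say `4^a`
and `4^b` with `a < b ≤ 2a`; then `γ = 2a - b` and `δ = b - a`. -/

namespace boxPi

variable {ι : Type*} {V : ι → Type*} (G : ∀ i, SimpleGraph (V i))

theorem bijective_update_neighborSet [DecidableEq ι] (x : ∀ i, V i) :
    Function.Bijective fun p : Σ i, (G i).neighborSet (x i) =>
      (⟨Function.update x p.1 p.2, p.1, by rw [Function.update_self]; exact p.2.2,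
        fun j hj => (Function.update_of_ne hj _ _).symm⟩ :
        (boxPi G).neighborSet x) := by
  constructor
  · rintro ⟨i, d, hd⟩ ⟨j, e, he⟩ h
    have h' := congrArg Subtype.val h
    by_cases hij : i = j
    · subst hij
      obtain rfl : d = e := by simpa using congrFun h' i
      rfl
    · have hd' : d = x i := by simpa [hij] using congrFun h' i
      exact ((G i).ne_of_adj hd hd'.symm).elim
  · rintro ⟨y, i, hi, hy⟩
    refine ⟨⟨i, y i, hi⟩, Subtype.ext ?_⟩
    exact (Function.eq_update_iff (g := y).2 ⟨rfl, fun j hj => (hy j hj).symm⟩).symm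

theorem card_neighborSet [Fintype ι] [∀ i, Finite (V i)] (x : ∀ i, V i) :
    Nat.card ((boxPi G).neighborSet x) = ∑ i, Nat.card ((G i).neighborSet (x i)) := by
  classical
  rw [← Nat.card_sigma]
  exact (Nat.card_congr (Equiv.ofBijective _ (bijective_update_neighborSet G x))).symm

end boxPi

namespace QuotientAddGroup

variable {G : Type*} [AddCommGroup G] {C : AddSubgroup G} {B : Set G}

theorem bijOn_mk_of_existsUnique_sub_mem (hB : ∀ v, ∃! c, c ∈ C ∧ v - c ∈ B) :
    Set.BijOn (mk : G → G ⧸ C) B Set.univ := by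
  refine ⟨Set.mapsTo_univ _ _, fun b hb b' hb' h => ?_, fun q _ => ?_⟩
  · obtain ⟨c, -, huniq⟩ := hB b
    have h0 : (0 : G) = c := huniq 0 ⟨C.zero_mem, by rwa [sub_zero]⟩
    have h1 : b - b' = c := huniq _ ⟨eq_iff_sub_mem.1 h, by rwa [sub_sub_cancel]⟩
    exact sub_eq_zero.1 (h1.trans h0.symm)
  · obtain ⟨v, rfl⟩ := mk_surjective q
    obtain ⟨c, ⟨hc, hvc⟩, -⟩ := hB v
    exact ⟨v - c, hvc, eq_iff_sub_mem.2 (by simpa using hc)⟩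

theorem bijOn_mk_two_torsion_of_existsUnique_sub_mem (hB : ∀ v, ∃! c, c ∈ C ∧ v - c ∈ B)
    (hneg : ∀ b ∈ B, -b ∈ B) :
    Set.BijOn (mk : G → G ⧸ C) (B ∩ {b | 2 • b = 0})
      (nsmulAddMonoidHom 2 : G ⧸ C →+ G ⧸ C).ker := by
  have hbij := bijOn_mk_of_existsUnique_sub_mem hB
  refine ⟨fun b hb => ?_, hbij.injOn.mono Set.inter_subset_left, fun q hq => ?_⟩
  · simp [← mk_nsmul, hb.2.out]
  · obtain ⟨b, hb, rfl⟩ := hbij.surjOn (Set.mem_univ q)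
    have hq' : (b : G ⧸ C) = ((-b : G) : G ⧸ C) := by
      rw [mk_neg, eq_neg_iff_add_eq_zero, ← two_nsmul]
      simpa using hq
    -- `2 • b ∈ C` makes `b` and `-b` two points of the tile `B` in the same coset
    have hb' : b = -b := hbij.injOn hb (hneg b hb) hq'
    refine ⟨b, ⟨hb, ?_⟩, rfl⟩
    change 2 • b = 0
    rw [two_nsmul, ← neg_eq_iff_add_eq_zero, ← hb']

end QuotientAddGroup

theorem AddMonoidHom.card_dvd_card_ker_sq {Q : Type*} [AddCommGroup Q] (f : Q →+ Q)
    (hf : ∀ x, f (f x) = 0) : Nat.card Q ∣ Nat.card f.ker ^ 2 := by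
  have hrange : f.range ≤ f.ker := by
    rintro _ ⟨x, rfl⟩
    exact hf x
  rw [AddSubgroup.card_eq_card_quotient_mul_card_addSubgroup f.ker,
    Nat.card_congr (QuotientAddGroup.quotientKerEquivRange f).toEquiv, sq]
  exact mul_dvd_mul_right (AddSubgroup.card_dvd_of_le hrange) _

theorem exists_four_pow_of_two_pow_mod_three {j : ℕ} (h : 2 ^ j % 3 = 1) :
    ∃ a, 2 ^ j = 4 ^ a := by
  obtain ⟨a, rfl | rfl⟩ := Nat.even_or_odd' j
  · exact ⟨a, by rw [pow_mul]; norm_num⟩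
  · rw [pow_succ, pow_mul, Nat.mul_mod, Nat.pow_mod] at h
    norm_num at h

theorem two_nsmul_ne_zero_of_boxPi_shri_adj {ι : Type*} {a : ι → ZMod 4 × ZMod 4}
    (ha : (boxPi fun _ : ι => Shri).Adj 0 a) : 2 • a ≠ 0 := by
  obtain ⟨i, hi, -⟩ := ha
  have key : ∀ d : ZMod 4 × ZMod 4, Shri.Adj 0 d → 2 • d ≠ 0 := by
    intro d hd
    simp only [Shri] at hd
    revert d
    decide
  exact fun h => key _ hi (congrFun h i)

theorem card_neighborSet_shri_zero : Nat.card (Shri.neighborSet 0) = 6 := by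
  have : Shri.neighborSet 0 =
      (({(0, 1), (1, 0), (1, 1), (0, 3), (3, 0), (3, 3)} : Finset (ZMod 4 × ZMod 4)) : Set _) := by
    ext d
    simp only [mem_neighborSet, Shri, Finset.mem_coe]
    revert d
    decide
  rw [this, Nat.card_coe_set_eq, Set.ncard_coe_finset]
  rfl

theorem card_neighborSet_top_zero :
    Nat.card ((⊤ : SimpleGraph (ZMod 2 × ZMod 2)).neighborSet 0) = 3 := by
  rw [Nat.card_eq_fintype_card]
  rfl

namespace DoobGraphZ2

variable {m n : ℕ}

theorem adj_iff_sub (x y : DoobVtx2 m n) :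
    (DoobGraphZ2 m n).Adj x y ↔ (DoobGraphZ2 m n).Adj (x - y) 0 := by
  simp only [DoobGraphZ2, boxProd_adj, boxPi, Shri, top_adj, Prod.fst_sub, Prod.snd_sub,
    Pi.sub_apply, sub_zero, Prod.fst_zero, Prod.snd_zero, Pi.zero_apply, funext_iff, sub_eq_zero,
    ne_eq]

def ball (m n : ℕ) : Set (DoobVtx2 m n) := insert 0 ((DoobGraphZ2 m n).neighborSet 0)

theorem isPerfectCode_iff (C : Set (DoobVtx2 m n)) :
    IsPerfectCode (DoobGraphZ2 m n) C ↔ ∀ v, ∃! c, c ∈ C ∧ v - c ∈ ball m n := by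
  refine forall_congr' fun v => existsUnique_congr fun c => and_congr_right' ?_
  rw [ball, Set.mem_insert_iff, mem_neighborSet, adj_comm _ 0, ← adj_iff_sub, sub_eq_zero]

theorem neg_mem_ball {x : DoobVtx2 m n} (hx : x ∈ ball m n) : -x ∈ ball m n := by
  rcases hx with rfl | hx
  · simp [ball]
  · rw [ball, Set.mem_insert_iff, mem_neighborSet, adj_iff_sub, zero_sub, neg_neg, adj_comm]
    exact Or.inr hx

theorem card_neighborSet_zero : Nat.card ((DoobGraphZ2 m n).neighborSet 0) = 6 * m + 3 * n := by
  rw [DoobGraphZ2, neighborSet_boxProd, Nat.card_coe_set_eq,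
    Set.ncard_union_eq (Set.disjoint_prod.2 (Or.inl
      (Set.disjoint_singleton_right.2 (notMem_neighborSet_self _)))),
    Set.ncard_prod, Set.ncard_prod]
  simp only [← Nat.card_coe_set_eq, boxPi.card_neighborSet, Prod.fst_zero, Prod.snd_zero,
    Pi.zero_apply, card_neighborSet_shri_zero, card_neighborSet_top_zero, Nat.card_unique,
    Finset.sum_const, Finset.card_univ, Fintype.card_fin, smul_eq_mul]
  ring

theorem neighborSet_zero_inter_two_torsion :
    (DoobGraphZ2 m n).neighborSet 0 ∩ {x | 2 • x = 0} =
      {0} ×ˢ (boxPi fun _ : Fin n => (⊤ : SimpleGraph (ZMod 2 × ZMod 2))).neighborSet 0 := by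
  have hchar : ∀ v : ZMod 2 × ZMod 2, 2 • v = 0 := by decide
  ext ⟨a, k⟩
  simp only [DoobGraphZ2, neighborSet_boxProd, Set.mem_inter_iff, Set.mem_union, Set.mem_prod,
    Set.mem_singleton_iff, Set.mem_ofPred_eq, Prod.smul_mk, Prod.mk_eq_zero, mem_neighborSet]
  constructor
  · rintro ⟨⟨ha, -⟩ | hk, h2a, -⟩
    · exact absurd h2a (two_nsmul_ne_zero_of_boxPi_shri_adj ha)
    · exact hk
  · rintro ⟨rfl, hk⟩
    exact ⟨Or.inr ⟨rfl, hk⟩, smul_zero _, funext fun j => hchar (k j)⟩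

theorem card_ball : Nat.card (ball m n) = 6 * m + 3 * n + 1 := by
  rw [ball, Nat.card_coe_set_eq, Set.ncard_insert_of_notMem (notMem_neighborSet_self _),
    ← Nat.card_coe_set_eq, card_neighborSet_zero]

theorem card_ball_inter_two_torsion :
    Nat.card ↥(ball m n ∩ {x | 2 • x = 0}) = 3 * n + 1 := by
  rw [ball, Set.insert_inter_of_mem (by simp), neighborSet_zero_inter_two_torsion,
    Nat.card_coe_set_eq, Set.ncard_insert_of_notMem (by simp), Set.ncard_prod,
    Set.ncard_singleton, one_mul, ← Nat.card_coe_set_eq, boxPi.card_neighborSet]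
  simp only [Pi.zero_apply, card_neighborSet_top_zero, Finset.sum_const, Finset.card_univ,
    Fintype.card_fin, smul_eq_mul]
  ring

theorem card_doobVtx2 : Nat.card (DoobVtx2 m n) = 2 ^ (4 * m + 2 * n) := by
  simp [pow_add, pow_mul]

theorem four_nsmul (x : DoobVtx2 m n) : 4 • x = 0 := by
  have h4 : ∀ v : ZMod 4 × ZMod 4, 4 • v = 0 := by decide
  have h2 : ∀ v : ZMod 2 × ZMod 2, 4 • v = 0 := by decide
  exact Prod.ext (funext fun i => h4 (x.1 i)) (funext fun j => h2 (x.2 j))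

theorem four_nsmul_quotient (C : AddSubgroup (DoobVtx2 m n)) (x : DoobVtx2 m n ⧸ C) :
    4 • x = 0 := by
  obtain ⟨v, rfl⟩ := QuotientAddGroup.mk_surjective x
  rw [← QuotientAddGroup.mk_nsmul, four_nsmul, QuotientAddGroup.mk_zero]

variable {C : AddSubgroup (DoobVtx2 m n)}

theorem card_quotient_of_isPerfectCode (hC : IsPerfectCode (DoobGraphZ2 m n) (C : Set _)) :
    Nat.card (DoobVtx2 m n ⧸ C) = 6 * m + 3 * n + 1 := by
  rw [← Nat.card_univ, ← card_ball, Nat.card_congr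
    ((QuotientAddGroup.bijOn_mk_of_existsUnique_sub_mem ((isPerfectCode_iff _).1 hC)).equiv _)]

theorem card_ker_two_nsmul_of_isPerfectCode (hC : IsPerfectCode (DoobGraphZ2 m n) (C : Set _)) :
    Nat.card (nsmulAddMonoidHom 2 : DoobVtx2 m n ⧸ C →+ _).ker = 3 * n + 1 := by
  rw [← card_ball_inter_two_torsion, Nat.card_congr
    ((QuotientAddGroup.bijOn_mk_two_torsion_of_existsUnique_sub_mem ((isPerfectCode_iff _).1 hC)
      fun _ => neg_mem_ball).equiv _)]
  rfl

end DoobGraphZ2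

theorem exists_parameters_of_two_pow_eq {m n e j : ℕ} (hm : 1 ≤ m)
    (he : 6 * m + 3 * n + 1 = 2 ^ e) (hj : 3 * n + 1 = 2 ^ j) (hdvd : 2 ^ e ∣ (2 ^ j) ^ 2) :
    ∃ γ δ : ℕ, 0 < δ ∧ 3 * n + 1 = 4 ^ (γ + δ) ∧ 6 * m + 4 ^ (γ + δ) = 4 ^ (γ + 2 * δ) := by
  obtain ⟨b, hb⟩ := exists_four_pow_of_two_pow_mod_three (j := e) (by omega)
  obtain ⟨a, ha⟩ := exists_four_pow_of_two_pow_mod_three (j := j) (by omega)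
  rw [ha, hb, ← pow_mul] at hdvd
  rw [hb] at he
  rw [ha] at hj
  have hba : b ≤ a * 2 := (Nat.pow_dvd_pow_iff_le_right (by norm_num)).1 hdvd
  have hab : a < b := (Nat.pow_lt_pow_iff_right (show 1 < 4 by norm_num)).1 (by omega)
  refine ⟨2 * a - b, b - a, by omega, ?_, ?_⟩
  · rw [show 2 * a - b + (b - a) = a by omega]
    omega
  · rw [show 2 * a - b + (b - a) = a by omega, show 2 * a - b + 2 * (b - a) = b by omega]
    omega

theorem additive_perfect_code_parameters_no_z4_part (m n : ℕ) (hm : 1 ≤ m)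
    (C : AddSubgroup (DoobVtx2 m n))
    (hC : IsPerfectCode (DoobGraphZ2 m n) (C : Set (DoobVtx2 m n))) :
    ∃ γ δ : ℕ, 0 < δ ∧
      3 * n + 1 = 4 ^ (γ + δ) ∧
      6 * m + 4 ^ (γ + δ) = 4 ^ (γ + 2 * δ) := by
  have hQ := DoobGraphZ2.card_quotient_of_isPerfectCode hC
  have hK := DoobGraphZ2.card_ker_two_nsmul_of_isPerfectCode hC
  have hdvd := (nsmulAddMonoidHom 2 : DoobVtx2 m n ⧸ C →+ _).card_dvd_card_ker_sq fun x =>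
    (smul_smul 2 2 x).trans (DoobGraphZ2.four_nsmul_quotient C x)
  obtain ⟨e, -, he⟩ := (Nat.dvd_prime_pow Nat.prime_two).1
    (DoobGraphZ2.card_doobVtx2 ▸ AddSubgroup.card_quotient_dvd_card C)
  obtain ⟨j, -, hj⟩ := (Nat.dvd_prime_pow Nat.prime_two).1
    (he ▸ AddSubgroup.card_addSubgroup_dvd_card (nsmulAddMonoidHom 2 : DoobVtx2 m n ⧸ C →+ _).ker)
  rw [he, hj] at hdvd
  exact exists_parameters_of_two_pow_eq hm (hQ ▸ he) (hK ▸ hj) hdvd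
end

section
/- For all integers γ ≥ 0 and δ > 0, setting m = (4^{γ+2δ} − 4^{γ+δ})/6 and n = (4^{γ+δ} − 1)/3, there exists an additive 1-perfect code in ℤ4^{2m} × ℤ2^{2n} with respect to the Doob D(m,n)-metric. -/
open SimpleGraph

namespace DoobAux

abbrev V4 := ZMod 4 × ZMod 4
abbrev V2 := ZMod 2 × ZMod 2

def w4 (p : V4) : V4 := (-p.2, p.1 - p.2)
def w2 (p : V2) : V2 := (-p.2, p.1 - p.2)

def s4 : Fin 6 → V4 → V4 :=
  ![id, w4, w4 ∘ w4, Neg.neg, fun p => -w4 p, fun p => -w4 (w4 p)]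
def s2 : Fin 6 → V2 → V2 :=
  ![id, w2, w2 ∘ w2, Neg.neg, fun p => -w2 p, fun p => -w2 (w2 p)]
def t4 : Fin 3 → V4 → V4 := ![id, w4, w4 ∘ w4]
def t2 : Fin 3 → V2 → V2 := ![id, w2, w2 ∘ w2]

def c6 : Fin 6 → Fin 6 → Fin 6 :=
  ![![0,1,2,3,4,5],![1,2,0,4,5,3],![2,0,1,5,3,4],![3,4,5,0,1,2],![4,5,3,1,2,0],![5,3,4,2,0,1]]
def i6 : Fin 6 → Fin 6 := ![0,2,1,3,5,4]

lemma s4_zero : ∀ p, s4 0 p = p := by decide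
lemma s2_zero : ∀ p, s2 0 p = p := by decide
lemma t4_zero : ∀ p, t4 0 p = p := by decide
lemma t2_zero : ∀ p, t2 0 p = p := by decide
lemma s4_comp : ∀ k l p, s4 k (s4 l p) = s4 (c6 k l) p := by decide
lemma s2_comp : ∀ k l p, s2 k (s2 l p) = s2 (c6 k l) p := by decide
lemma s4_inv : ∀ k p, s4 (i6 k) (s4 k p) = p := by decide
lemma s2_inv : ∀ k p, s2 (i6 k) (s2 k p) = p := by decide
lemma s4_free : ∀ k k' p, k ≠ k' → s4 k p = s4 k' p → p + p = 0 := by decide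
lemma s4_tors : ∀ k (p : V4), s4 k p + s4 k p = 0 → p + p = 0 := by decide
lemma t4_comp : ∀ k l p, t4 k (t4 l p) = t4 (k + l) p := by decide
lemma t2_comp : ∀ k l p, t2 k (t2 l p) = t2 (k + l) p := by decide
lemma t4_inv : ∀ k p, t4 (-k) (t4 k p) = p := by decide
lemma t2_inv : ∀ k p, t2 (-k) (t2 k p) = p := by decide
lemma t4_free : ∀ k k' (p : V4), k ≠ k' → t4 k p = t4 k' p → p = 0 := by decide
lemma t2_free : ∀ k k' (p : V2), k ≠ k' → t2 k p = t2 k' p → p = 0 := by decide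
lemma t4_ne : ∀ k (p : V4), t4 k p = 0 → p = 0 := by decide
lemma t2_ne : ∀ k (p : V2), t2 k p = 0 → p = 0 := by decide
lemma t4_tors : ∀ k (p : V4), p + p = 0 → t4 k p + t4 k p = 0 := by decide
lemma v2_tors : ∀ p : V2, p + p = 0 := by decide

def lf4 (p : V4) (q : V4) : V4 := p.1.val • q + p.2.val • w4 q
def lf2 (p : V4) (q : V2) : V2 := p.1.val • q + p.2.val • w2 q
def mf4 (p : V2) (q : V4) : V4 := p.1.val • q + p.2.val • w4 q
def mf2 (p : V2) (q : V2) : V2 := p.1.val • q + p.2.val • w2 q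

def s6v : Fin 6 → V4 := ![(1,0),(0,1),(3,3),(3,0),(0,3),(1,1)]
def s3v : Fin 3 → V2 := ![(1,0),(0,1),(1,1)]

lemma lf4_add : ∀ p p' q, lf4 (p + p') q = lf4 p q + lf4 p' q := by decide
lemma lf2_add : ∀ p p' q, lf2 (p + p') q = lf2 p q + lf2 p' q := by decide
lemma mf4_add : ∀ p p' q, q + q = 0 → mf4 (p + p') q = mf4 p q + mf4 p' q := by decide
lemma mf2_add : ∀ p p' q, mf2 (p + p') q = mf2 p q + mf2 p' q := by decide
lemma lf4_zero : ∀ q, lf4 0 q = 0 := by decide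
lemma lf2_zero : ∀ q, lf2 0 q = 0 := by decide
lemma mf4_zero : ∀ q, mf4 0 q = 0 := by decide
lemma mf2_zero : ∀ q, mf2 0 q = 0 := by decide
lemma lf4_s6 : ∀ k q, lf4 (s6v k) q = s4 k q := by decide
lemma lf2_s6 : ∀ k q, lf2 (s6v k) q = s2 k q := by decide
lemma mf4_s3 : ∀ k q, q + q = 0 → mf4 (s3v k) q = t4 k q := by decide
lemma mf2_s3 : ∀ k q, mf2 (s3v k) q = t2 k q := by decide

lemma s6v_mem : ∀ k, s6v k ∈
    ({(0, 1), (1, 0), (1, 1), (0, 3), (3, 0), (3, 3)} : Finset V4) := by decide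
lemma s6v_surj : ∀ p ∈ ({(0, 1), (1, 0), (1, 1), (0, 3), (3, 0), (3, 3)} : Finset V4),
    ∃ k, s6v k = p := by decide
lemma s3v_ne : ∀ k, s3v k ≠ 0 := by decide
lemma s3v_surj : ∀ p : V2, p ≠ 0 → ∃ k, s3v k = p := by decide
lemma cardW4 : Fintype.card {p : V4 // p + p = 0} = 4 := by decide

end DoobAux
section
namespace DoobAux2
open DoobAux

variable (δ γ : ℕ)

abbrev HH := (Fin δ → V4) × (Fin γ → V2)

variable {δ γ}

def σg (k : Fin 6) (h : HH δ γ) : HH δ γ :=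
  (fun i => s4 k (h.1 i), fun j => s2 k (h.2 j))
def τg (k : Fin 3) (h : HH δ γ) : HH δ γ :=
  (fun i => t4 k (h.1 i), fun j => t2 k (h.2 j))

lemma coord_add (h h' : HH δ γ) (i : Fin δ) : (h + h').1 i = h.1 i + h'.1 i := rfl
lemma coord2_add (h h' : HH δ γ) (j : Fin γ) : (h + h').2 j = h.2 j + h'.2 j := rfl

lemma tors_iff (h : HH δ γ) : h + h = 0 ↔ ∀ i, h.1 i + h.1 i = 0 := by
  constructor
  · intro hh i
    have := congrFun (congrArg Prod.fst hh) i
    exact this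
  · intro hi
    refine Prod.ext ?_ ?_
    · funext i; exact hi i
    · funext j; exact v2_tors _

lemma eq_zero_iff (h : HH δ γ) : h = 0 ↔ (∀ i, h.1 i = 0) ∧ ∀ j, h.2 j = 0 := by
  constructor
  · rintro rfl; exact ⟨fun _ => rfl, fun _ => rfl⟩
  · rintro ⟨h1, h2⟩; exact Prod.ext (funext h1) (funext h2)

lemma σg_zero (h : HH δ γ) : σg 0 h = h :=
  Prod.ext (funext fun i => s4_zero _) (funext fun j => s2_zero _)
lemma σg_comp (k l : Fin 6) (h : HH δ γ) : σg k (σg l h) = σg (c6 k l) h :=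
  Prod.ext (funext fun i => s4_comp _ _ _) (funext fun j => s2_comp _ _ _)
lemma σg_inv (k : Fin 6) (h : HH δ γ) : σg (i6 k) (σg k h) = h :=
  Prod.ext (funext fun i => s4_inv _ _) (funext fun j => s2_inv _ _)
lemma τg_zero (h : HH δ γ) : τg 0 h = h :=
  Prod.ext (funext fun i => t4_zero _) (funext fun j => t2_zero _)
lemma τg_comp (k l : Fin 3) (h : HH δ γ) : τg k (τg l h) = τg (k + l) h :=
  Prod.ext (funext fun i => t4_comp _ _ _) (funext fun j => t2_comp _ _ _)
lemma τg_inv (k : Fin 3) (h : HH δ γ) : τg (-k) (τg k h) = h :=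
  Prod.ext (funext fun i => t4_inv _ _) (funext fun j => t2_inv _ _)

lemma σg_free {h : HH δ γ} (hh : ¬ h + h = 0) {k k' : Fin 6}
    (he : σg k h = σg k' h) : k = k' := by
  by_contra hkk
  apply hh
  rw [tors_iff]
  intro i
  exact s4_free k k' _ hkk (congrFun (congrArg Prod.fst he) i)

lemma σg_tors {k : Fin 6} {h : HH δ γ} (hh : σg k h + σg k h = 0) : h + h = 0 := by
  rw [tors_iff] at hh ⊢
  exact fun i => s4_tors k _ (hh i)

lemma τg_free {h : HH δ γ} (hh : h ≠ 0) {k k' : Fin 3}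
    (he : τg k h = τg k' h) : k = k' := by
  by_contra hkk
  apply hh
  rw [eq_zero_iff]
  constructor
  · intro i; exact t4_free k k' _ hkk (congrFun (congrArg Prod.fst he) i)
  · intro j; exact t2_free k k' _ hkk (congrFun (congrArg Prod.snd he) j)

lemma τg_ne {k : Fin 3} {h : HH δ γ} (hh : τg k h = 0) : h = 0 := by
  rw [eq_zero_iff] at hh ⊢
  exact ⟨fun i => t4_ne _ _ (hh.1 i), fun j => t2_ne _ _ (hh.2 j)⟩

lemma τg_tors {k : Fin 3} {h : HH δ γ} (hh : h + h = 0) : τg k h + τg k h = 0 := by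
  rw [tors_iff] at hh ⊢
  exact fun i => t4_tors _ _ (hh i)

variable (δ γ)

abbrev Qt := {h : HH δ γ // ¬ h + h = 0}
abbrev Tt := {h : HH δ γ // h + h = 0 ∧ h ≠ 0}

def setoidQ : Setoid (Qt δ γ) where
  r x y := ∃ k, σg k x.1 = y.1
  iseqv := by
    refine ⟨fun x => ⟨0, σg_zero _⟩, ?_, ?_⟩
    · rintro x y ⟨k, hk⟩
      exact ⟨i6 k, by rw [← hk, σg_inv]⟩
    · rintro x y z ⟨k, hk⟩ ⟨l, hl⟩
      exact ⟨c6 l k, by rw [← σg_comp, hk, hl]⟩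

def setoidT : Setoid (Tt δ γ) where
  r x y := ∃ k, τg k x.1 = y.1
  iseqv := by
    refine ⟨fun x => ⟨0, τg_zero _⟩, ?_, ?_⟩
    · rintro x y ⟨k, hk⟩
      exact ⟨-k, by rw [← hk, τg_inv]⟩
    · rintro x y z ⟨k, hk⟩ ⟨l, hl⟩
      exact ⟨l + k, by rw [← τg_comp, hk, hl]⟩

instance : DecidableRel (setoidQ δ γ).r := fun x y =>
  inferInstanceAs (Decidable (∃ k, σg k x.1 = y.1))
instance : DecidableRel (setoidT δ γ).r := fun x y =>
  inferInstanceAs (Decidable (∃ k, τg k x.1 = y.1))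

abbrev QuotQ := Quotient (setoidQ δ γ)
abbrev QuotT := Quotient (setoidT δ γ)

noncomputable instance : Fintype (QuotQ δ γ) := by
  classical exact Quotient.fintype _
noncomputable instance : Fintype (QuotT δ γ) := by
  classical exact Quotient.fintype _

end DoobAux2
end
namespace DoobAux2
open DoobAux

variable (δ γ : ℕ)

lemma card_HH : Fintype.card (HH δ γ) = 4 ^ (γ + 2 * δ) := by
  have : Fintype.card (HH δ γ) = 16 ^ δ * 4 ^ γ := by
    simp [Fintype.card_prod, Fintype.card_fun, ZMod.card]
  rw [this, pow_add, pow_mul]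
  ring

def Teq : {h : HH δ γ // h + h = 0} ≃ (Fin δ → {p : V4 // p + p = 0}) × (Fin γ → V2) where
  toFun h := (fun i => ⟨h.1.1 i, (tors_iff h.1).1 h.2 i⟩, h.1.2)
  invFun x := ⟨((fun i => (x.1 i).1), x.2), (tors_iff _).2 (fun i => (x.1 i).2)⟩
  left_inv h := Subtype.ext rfl
  right_inv x := by
    refine Prod.ext ?_ rfl
    funext i
    rfl

lemma card_T : Fintype.card {h : HH δ γ // h + h = 0} = 4 ^ (γ + δ) := by
  rw [Fintype.card_congr (Teq δ γ)]
  have : Fintype.card ((Fin δ → {p : V4 // p + p = 0}) × (Fin γ → V2)) = 4 ^ δ * 4 ^ γ := by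
    simp [Fintype.card_prod, Fintype.card_fun, cardW4, ZMod.card]
  rw [this, pow_add]
  ring

lemma card_Qt : Fintype.card (Qt δ γ) = 4 ^ (γ + 2 * δ) - 4 ^ (γ + δ) := by
  have := Fintype.card_subtype_compl (fun h : HH δ γ => h + h = 0)
  rw [this, card_HH, card_T]

lemma card_Tt : Fintype.card (Tt δ γ) = 4 ^ (γ + δ) - 1 := by
  rw [← card_T δ γ, Fintype.card_subtype, Fintype.card_subtype]
  have : (Finset.univ.filter fun h : HH δ γ => h + h = 0 ∧ h ≠ 0)
      = (Finset.univ.filter fun h : HH δ γ => h + h = 0).erase 0 := by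
    ext h
    simp only [Finset.mem_filter, Finset.mem_erase, Finset.mem_univ, true_and]
    tauto
  rw [this, Finset.card_erase_of_mem]
  simp

noncomputable def F6 : QuotQ δ γ × Fin 6 → Qt δ γ :=
  fun ok => ⟨σg ok.2 ok.1.out.1, fun hc => ok.1.out.2 (σg_tors hc)⟩

lemma F6_bij : Function.Bijective (F6 δ γ) := by
  constructor
  · rintro ⟨o, k⟩ ⟨o', k'⟩ he
    have he' : σg k o.out.1 = σg k' o'.out.1 := congrArg Subtype.val he
    have hrel : (setoidQ δ γ).r o.out o'.out := by
      refine ⟨c6 (i6 k') k, ?_⟩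
      rw [← σg_comp, he', σg_inv]
    have ho : o = o' := by
      have := Quotient.sound hrel
      rwa [Quotient.out_eq, Quotient.out_eq] at this
    subst ho
    exact Prod.ext rfl (σg_free o.out.2 he')
  · rintro ⟨h, hh⟩
    obtain ⟨k, hk⟩ : (setoidQ δ γ).r (Quotient.mk _ ⟨h, hh⟩).out ⟨h, hh⟩ :=
      Quotient.exact (Quotient.out_eq _)
    exact ⟨(Quotient.mk _ ⟨h, hh⟩, k), Subtype.ext hk⟩

noncomputable def F3 : QuotT δ γ × Fin 3 → Tt δ γ :=
  fun ok => ⟨τg ok.2 ok.1.out.1,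
    ⟨τg_tors ok.1.out.2.1, fun hc => ok.1.out.2.2 (τg_ne hc)⟩⟩

lemma F3_bij : Function.Bijective (F3 δ γ) := by
  constructor
  · rintro ⟨o, k⟩ ⟨o', k'⟩ he
    have he' : τg k o.out.1 = τg k' o'.out.1 := congrArg Subtype.val he
    have hrel : (setoidT δ γ).r o.out o'.out := by
      refine ⟨-k' + k, ?_⟩
      rw [← τg_comp, he', τg_inv]
    have ho : o = o' := by
      have := Quotient.sound hrel
      rwa [Quotient.out_eq, Quotient.out_eq] at this
    subst ho
    exact Prod.ext rfl (τg_free o.out.2.2 he')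
  · rintro ⟨h, hh⟩
    obtain ⟨k, hk⟩ : (setoidT δ γ).r (Quotient.mk _ ⟨h, hh⟩).out ⟨h, hh⟩ :=
      Quotient.exact (Quotient.out_eq _)
    exact ⟨(Quotient.mk _ ⟨h, hh⟩, k), Subtype.ext hk⟩

lemma card_QuotQ : Fintype.card (QuotQ δ γ) * 6 = 4 ^ (γ + 2 * δ) - 4 ^ (γ + δ) := by
  have := Fintype.card_congr (Equiv.ofBijective _ (F6_bij δ γ))
  rw [Fintype.card_prod, Fintype.card_fin] at this
  rw [this, card_Qt]

lemma card_QuotT : Fintype.card (QuotT δ γ) * 3 = 4 ^ (γ + δ) - 1 := by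
  have := Fintype.card_congr (Equiv.ofBijective _ (F3_bij δ γ))
  rw [Fintype.card_prod, Fintype.card_fin] at this
  rw [this, card_Tt]

end DoobAux2
namespace DoobAux2
open DoobAux

variable {δ γ m n : ℕ} (eQ : Fin m ≃ QuotQ δ γ) (eT : Fin n ≃ QuotT δ γ)

noncomputable def Av (i : Fin m) : HH δ γ := (eQ i).out.1
noncomputable def Bv (j : Fin n) : HH δ γ := (eT j).out.1

abbrev Ball (m n : ℕ) := Option ((Fin m × Fin 6) ⊕ (Fin n × Fin 3))

noncomputable def Phi : Ball m n → HH δ γ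
  | none => 0
  | some (Sum.inl (i, k)) => σg k (Av eQ i)
  | some (Sum.inr (j, k)) => τg k (Bv eT j)

lemma Av_nt (i : Fin m) : ¬ (Av eQ i + Av eQ i = 0) := (eQ i).out.2
lemma Bv_tors (j : Fin n) : Bv eT j + Bv eT j = 0 := (eT j).out.2.1
lemma Bv_ne (j : Fin n) : Bv eT j ≠ 0 := (eT j).out.2.2

lemma Phi_bij : Function.Bijective (Phi eQ eT) := by
  have hQ : ∀ (i : Fin m) (k : Fin 6), ¬ (σg k (Av eQ i) + σg k (Av eQ i) = 0) :=
    fun i k hc => Av_nt eQ i (σg_tors hc)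
  have hT : ∀ (j : Fin n) (k : Fin 3), τg k (Bv eT j) + τg k (Bv eT j) = 0 :=
    fun j k => τg_tors (Bv_tors eT j)
  have hTn : ∀ (j : Fin n) (k : Fin 3), τg k (Bv eT j) ≠ 0 :=
    fun j k hc => Bv_ne eT j (τg_ne hc)
  constructor
  · rintro (_ | (⟨i, k⟩ | ⟨j, k⟩)) (_ | (⟨i', k'⟩ | ⟨j', k'⟩)) he <;>
      simp only [Phi] at he
    · rfl
    · exact absurd (by rw [← he]; simp) (hQ i' k')
    · exact absurd he.symm (hTn j' k')
    · exact absurd (by rw [he]; simp) (hQ i k)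
    · -- σ = σ case
      have hrel : (setoidQ δ γ).r (eQ i).out (eQ i').out := by
        refine ⟨c6 (i6 k') k, ?_⟩
        show σg (c6 (i6 k') k) (Av eQ i) = Av eQ i'
        rw [← σg_comp, he, σg_inv]
      have hii : i = i' := by
        apply eQ.injective
        rw [← Quotient.out_eq (eQ i), ← Quotient.out_eq (eQ i')]
        exact Quotient.sound hrel
      subst hii
      have hkk : k = k' := σg_free (Av_nt eQ i) he
      subst hkk; rfl
    · exact absurd (by rw [he]; exact hT j' k') (hQ i k)
    · exact absurd he (hTn j k)
    · exact absurd (by rw [← he]; exact hT j k) (hQ i' k')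
    · -- τ = τ case
      have hrel : (setoidT δ γ).r (eT j).out (eT j').out := by
        refine ⟨-k' + k, ?_⟩
        show τg (-k' + k) (Bv eT j) = Bv eT j'
        rw [← τg_comp, he, τg_inv]
      have hjj : j = j' := by
        apply eT.injective
        rw [← Quotient.out_eq (eT j), ← Quotient.out_eq (eT j')]
        exact Quotient.sound hrel
      subst hjj
      have hkk : k = k' := τg_free (Bv_ne eT j) he
      subst hkk; rfl
  · intro h
    by_cases h2 : h + h = 0
    · by_cases h0 : h = 0
      · exact ⟨none, by simp only [Phi]; exact h0.symm⟩
      · obtain ⟨k, hk⟩ : (setoidT δ γ).r (Quotient.mk _ ⟨h, h2, h0⟩).out ⟨h, h2, h0⟩ :=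
          Quotient.exact (Quotient.out_eq _)
        refine ⟨some (Sum.inr (eT.symm (Quotient.mk _ ⟨h, h2, h0⟩), k)), ?_⟩
        show τg k (Bv eT _) = h
        unfold Bv
        rw [Equiv.apply_symm_apply]
        exact hk
    · obtain ⟨k, hk⟩ : (setoidQ δ γ).r (Quotient.mk _ ⟨h, h2⟩).out ⟨h, h2⟩ :=
        Quotient.exact (Quotient.out_eq _)
      refine ⟨some (Sum.inl (eQ.symm (Quotient.mk _ ⟨h, h2⟩), k)), ?_⟩
      show σg k (Av eQ _) = h
      unfold Av
      rw [Equiv.apply_symm_apply]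
      exact hk

end DoobAux2
namespace DoobAux2
open DoobAux

variable {δ γ m n : ℕ}

def lift4 (p : V4) (a : HH δ γ) : HH δ γ :=
  (fun i => lf4 p (a.1 i), fun j => lf2 p (a.2 j))
def lift2 (p : V2) (c : HH δ γ) : HH δ γ :=
  (fun i => mf4 p (c.1 i), fun j => mf2 p (c.2 j))

lemma lift4_add (p p' : V4) (a : HH δ γ) : lift4 (p + p') a = lift4 p a + lift4 p' a :=
  Prod.ext (funext fun i => lf4_add p p' _) (funext fun j => lf2_add p p' _)
lemma lift2_add (p p' : V2) {c : HH δ γ} (hc : c + c = 0) :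
    lift2 (p + p') c = lift2 p c + lift2 p' c :=
  Prod.ext (funext fun i => mf4_add p p' _ ((tors_iff c).1 hc i))
    (funext fun j => mf2_add p p' _)
lemma lift4_zero (a : HH δ γ) : lift4 0 a = 0 :=
  Prod.ext (funext fun i => lf4_zero _) (funext fun j => lf2_zero _)
lemma lift2_zero (c : HH δ γ) : lift2 0 c = 0 :=
  Prod.ext (funext fun i => mf4_zero _) (funext fun j => mf2_zero _)
lemma lift4_s6 (k : Fin 6) (a : HH δ γ) : lift4 (s6v k) a = σg k a :=
  Prod.ext (funext fun i => lf4_s6 k _) (funext fun j => lf2_s6 k _)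
lemma lift2_s3 (k : Fin 3) {c : HH δ γ} (hc : c + c = 0) : lift2 (s3v k) c = τg k c :=
  Prod.ext (funext fun i => mf4_s3 k _ ((tors_iff c).1 hc i))
    (funext fun j => mf2_s3 k _)

variable (eQ : Fin m ≃ QuotQ δ γ) (eT : Fin n ≃ QuotT δ γ)

noncomputable def phif (v : DoobVtx2 m n) : HH δ γ :=
  (∑ i, lift4 (v.1 i) (Av eQ i)) + (∑ j, lift2 (v.2 j) (Bv eT j))

lemma phif_add (v w : DoobVtx2 m n) :
    phif eQ eT (v + w) = phif eQ eT v + phif eQ eT w := by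
  unfold phif
  simp only [Prod.fst_add, Prod.snd_add, Pi.add_apply]
  rw [Finset.sum_congr rfl (fun i _ => lift4_add (v.1 i) (w.1 i) (Av eQ i)),
    Finset.sum_congr rfl (fun j _ => lift2_add (v.2 j) (w.2 j) (Bv_tors eT j)),
    Finset.sum_add_distrib, Finset.sum_add_distrib]
  abel

def bmap : Ball m n → DoobVtx2 m n
  | none => 0
  | some (Sum.inl (i, k)) => (Function.update 0 i (s6v k), 0)
  | some (Sum.inr (j, k)) => (0, Function.update 0 j (s3v k))

lemma phif_bmap (x : Ball m n) : phif eQ eT (bmap x) = Phi eQ eT x := by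
  rcases x with _ | (⟨i, k⟩ | ⟨j, k⟩) <;> simp only [Phi, bmap]
  · show (∑ i, lift4 ((0 : Fin m → V4) i) (Av eQ i)) +
      (∑ j, lift2 ((0 : Fin n → V2) j) (Bv eT j)) = 0
    simp [lift4_zero, lift2_zero]
  · show (∑ i', lift4 (Function.update (0 : Fin m → V4) i (s6v k) i') (Av eQ i')) +
      (∑ j', lift2 ((0 : Fin n → V2) j') (Bv eT j')) = σg k (Av eQ i)
    have hs : (∑ j', lift2 ((0 : Fin n → V2) j') (Bv eT j')) = 0 := by
      simp [lift2_zero]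
    have hf : (∑ i', lift4 (Function.update (0 : Fin m → V4) i (s6v k) i') (Av eQ i'))
        = σg k (Av eQ i) := by
      rw [Finset.sum_eq_single i]
      · rw [Function.update_self, lift4_s6]
      · intro b _ hb
        rw [Function.update_of_ne hb]
        exact lift4_zero _
      · intro hb; exact absurd (Finset.mem_univ i) hb
    rw [hs, hf, add_zero]
  · show (∑ i', lift4 ((0 : Fin m → V4) i') (Av eQ i')) +
      (∑ j', lift2 (Function.update (0 : Fin n → V2) j (s3v k) j') (Bv eT j')) =
        τg k (Bv eT j)
    have hs : (∑ i', lift4 ((0 : Fin m → V4) i') (Av eQ i')) = 0 := by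
      simp [lift4_zero]
    have hf : (∑ j', lift2 (Function.update (0 : Fin n → V2) j (s3v k) j') (Bv eT j'))
        = τg k (Bv eT j) := by
      rw [Finset.sum_eq_single j]
      · rw [Function.update_self, lift2_s3 k (Bv_tors eT j)]
      · intro b _ hb
        rw [Function.update_of_ne hb]
        exact lift2_zero _
      · intro hb; exact absurd (Finset.mem_univ j) hb
    rw [hs, hf, zero_add]

lemma boxPi_adj {ι : Type*} {V : ι → Type*} (G : ∀ i, SimpleGraph (V i))
    (x y : ∀ i, V i) :
    (boxPi G).Adj x y ↔ ∃ i, (G i).Adj (x i) (y i) ∧ ∀ j, j ≠ i → x j = y j :=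
  Iff.rfl

lemma shri_adj (a b : V4) : Shri.Adj a b ↔ a - b ∈
    ({(0, 1), (1, 0), (1, 1), (0, 3), (3, 0), (3, 3)} : Finset V4) := Iff.rfl

lemma adj_iff (v w : DoobVtx2 m n) :
    (v = w ∨ (DoobGraphZ2 m n).Adj v w) ↔ ∃ x : Ball m n, v - w = bmap x := by
  constructor
  · rintro (rfl | hadj)
    · exact ⟨none, by simp only [bmap]; exact sub_self v⟩
    · rw [DoobGraphZ2, SimpleGraph.boxProd_adj] at hadj
      rcases hadj with ⟨hS, h2⟩ | ⟨hK, h1⟩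
      · obtain ⟨i, hsh, hoth⟩ := (boxPi_adj _ _ _).1 hS
        obtain ⟨k, hk⟩ := s6v_surj _ ((shri_adj _ _).1 hsh)
        refine ⟨some (Sum.inl (i, k)), Prod.ext ?_ ?_⟩
        · funext j
          by_cases hj : j = i
          · subst hj
            show v.1 j - w.1 j = Function.update (0 : Fin m → V4) j (s6v k) j
            rw [Function.update_self]
            exact hk.symm
          · show v.1 j - w.1 j = Function.update (0 : Fin m → V4) i (s6v k) j
            rw [Function.update_of_ne hj, hoth j hj]
            exact sub_self _
        · show v.2 - w.2 = 0
          rw [h2]; exact sub_self _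
      · obtain ⟨j, hne, hoth⟩ := (boxPi_adj _ _ _).1 hK
        rw [SimpleGraph.top_adj] at hne
        obtain ⟨k, hk⟩ := s3v_surj _ (sub_ne_zero.2 hne)
        refine ⟨some (Sum.inr (j, k)), Prod.ext ?_ ?_⟩
        · show v.1 - w.1 = 0
          rw [h1]; exact sub_self _
        · funext j'
          by_cases hj : j' = j
          · subst hj
            show v.2 j' - w.2 j' = Function.update (0 : Fin n → V2) j' (s3v k) j'
            rw [Function.update_self]
            exact hk.symm
          · show v.2 j' - w.2 j' = Function.update (0 : Fin n → V2) j (s3v k) j'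
            rw [Function.update_of_ne hj, hoth j' hj]
            exact sub_self _
  · rintro ⟨(_ | (⟨i, k⟩ | ⟨j, k⟩)), hx⟩ <;> simp only [bmap] at hx
    · exact Or.inl (sub_eq_zero.1 hx)
    · refine Or.inr ?_
      rw [DoobGraphZ2, SimpleGraph.boxProd_adj]
      refine Or.inl ⟨(boxPi_adj _ _ _).2 ⟨i, ?_, ?_⟩, ?_⟩
      · rw [shri_adj]
        have h1 : v.1 i - w.1 i = s6v k := by
          have h2 : v.1 i - w.1 i = Function.update (0 : Fin m → V4) i (s6v k) i :=
            congrFun (congrArg Prod.fst hx) i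
          rwa [Function.update_self] at h2
        rw [h1]
        exact s6v_mem k
      · intro j hj
        have h2 : v.1 j - w.1 j = Function.update (0 : Fin m → V4) i (s6v k) j :=
          congrFun (congrArg Prod.fst hx) j
        rw [Function.update_of_ne hj] at h2
        exact sub_eq_zero.1 h2
      · exact sub_eq_zero.1 (congrArg Prod.snd hx)
    · refine Or.inr ?_
      rw [DoobGraphZ2, SimpleGraph.boxProd_adj]
      refine Or.inr ⟨(boxPi_adj _ _ _).2 ⟨j, ?_, ?_⟩, ?_⟩
      · rw [SimpleGraph.top_adj]
        have h1 : v.2 j - w.2 j = s3v k := by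
          have h2 : v.2 j - w.2 j = Function.update (0 : Fin n → V2) j (s3v k) j :=
            congrFun (congrArg Prod.snd hx) j
          rwa [Function.update_self] at h2
        exact sub_ne_zero.1 (by rw [h1]; exact s3v_ne k)
      · intro j' hj
        have h2 : v.2 j' - w.2 j' = Function.update (0 : Fin n → V2) j (s3v k) j' :=
          congrFun (congrArg Prod.snd hx) j'
        rw [Function.update_of_ne hj] at h2
        exact sub_eq_zero.1 h2
      · exact sub_eq_zero.1 (congrArg Prod.fst hx)

end DoobAux2

theorem exists_additive_perfect_code (γ δ m n : ℕ) (hδ : 0 < δ)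
    (hm : 6 * m + 4 ^ (γ + δ) = 4 ^ (γ + 2 * δ))
    (hn : 3 * n + 1 = 4 ^ (γ + δ)) :
    ∃ C : AddSubgroup (DoobVtx2 m n),
      IsPerfectCode (DoobGraphZ2 m n) (C : Set (DoobVtx2 m n)) := by
  classical
  have hq : Fintype.card (DoobAux2.QuotQ δ γ) = m := by
    have h1 := DoobAux2.card_QuotQ δ γ
    omega
  have ht : Fintype.card (DoobAux2.QuotT δ γ) = n := by
    have h1 := DoobAux2.card_QuotT δ γ
    omega
  let eQ : Fin m ≃ DoobAux2.QuotQ δ γ := (Fintype.equivFinOfCardEq hq).symm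
  let eT : Fin n ≃ DoobAux2.QuotT δ γ := (Fintype.equivFinOfCardEq ht).symm
  let φ : DoobVtx2 m n →+ DoobAux2.HH δ γ :=
    AddMonoidHom.mk' (DoobAux2.phif eQ eT) (DoobAux2.phif_add eQ eT)
  have hφb : ∀ x, φ (DoobAux2.bmap x) = DoobAux2.Phi eQ eT x := DoobAux2.phif_bmap eQ eT
  have hbij := DoobAux2.Phi_bij eQ eT
  refine ⟨φ.ker, fun v => ?_⟩
  obtain ⟨x, hx⟩ := hbij.2 (φ v)
  have hmem : v - DoobAux2.bmap x ∈ φ.ker := by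
    rw [AddMonoidHom.mem_ker, map_sub, hφb, hx, sub_self]
  refine ⟨v - DoobAux2.bmap x, ⟨hmem, ?_⟩, ?_⟩
  · exact (DoobAux2.adj_iff v _).2 ⟨x, (sub_sub_cancel v _).symm ▸ rfl⟩
  · rintro c ⟨hc, hrel⟩
    obtain ⟨y, hy⟩ := (DoobAux2.adj_iff v c).1 hrel
    have hφc : φ c = 0 := AddMonoidHom.mem_ker.1 hc
    have hyx : y = x := by
      apply hbij.1
      rw [← hφb y, ← hφb x, ← hy, hφb x, hx, map_sub, hφc, sub_zero]
    rw [← sub_sub_cancel v c, hy, hyx]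
end
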